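/- arXiv:2402.06705 — 4 statements merged into one kernel-verified Lean document; each statement's English description precedes it below -/
import Mathlib

section
/- Let G be a finite group and x, y ∈ G with coprime conjugacy class sizes |x^G| and |y^G|. If x and y commute, then |x^G| and |y^G| both divide |(xy)^G|. -/
def classSet {G : Type*} [Group G] (x : G) : Set G := {y | IsConj x y}

noncomputable def classSize {G : Type*} [Group G] (x : G) : ℕ := Nat.card (classSet x)

lemma classSet_eq_orbit {G : Type*} [Group G] (x : G) :
    classSet x = MulAction.orbit (ConjAct G) x := by
  ext h
  rw [ConjAct.mem_orbit_conjAct]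
  exact ⟨IsConj.symm, IsConj.symm⟩

lemma classSize_eq_index {G : Type*} [Group G] (x : G) :
    classSize x = (MulAction.stabilizer (ConjAct G) x).index := by
  rw [MulAction.index_stabilizer, classSize, classSet_eq_orbit,
    Nat.card_coe_set_eq]

lemma exists_pow_eq_mul_left {G : Type*} [Group G] [Finite G] (x y : G)
    (hcomm : Commute x y) (hord : Nat.Coprime (orderOf x) (orderOf y)) :
    ∃ k : ℕ, (x * y) ^ k = x := by
  obtain ⟨k, hk1, hk0⟩ := Nat.chineseRemainder hord 1 0
  refine ⟨k, ?_⟩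
  have hxy : (x * y) ^ k = x ^ k * y ^ k := hcomm.mul_pow k
  have hx : x ^ k = x ^ 1 := pow_eq_pow_iff_modEq.mpr hk1
  have hy : y ^ k = y ^ 0 := pow_eq_pow_iff_modEq.mpr hk0
  simp [hxy, hx, hy]

theorem stmt1 {G : Type*} [Group G] [Finite G] (x y : G) (hcomm : Commute x y)
    (hord : Nat.Coprime (orderOf x) (orderOf y))
    (h : Nat.Coprime (classSize x) (classSize y)) :
    classSize x ∣ classSize (x * y) ∧ classSize y ∣ classSize (x * y) := by
  obtain ⟨k, hk⟩ := exists_pow_eq_mul_left x y hcomm hord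
  obtain ⟨l, hl⟩ : ∃ l : ℕ, (x * y) ^ l = y := by
    rw [hcomm.eq]
    exact exists_pow_eq_mul_left y x hcomm.symm hord.symm
  have hsx : MulAction.stabilizer (ConjAct G) (x * y) ≤ MulAction.stabilizer (ConjAct G) x := by
    intro g hg
    rw [MulAction.mem_stabilizer_iff] at hg ⊢
    rw [← hk, smul_pow', hg]
  have hsy : MulAction.stabilizer (ConjAct G) (x * y) ≤ MulAction.stabilizer (ConjAct G) y := by
    intro g hg
    rw [MulAction.mem_stabilizer_iff] at hg ⊢
    rw [← hl, smul_pow', hg]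
  rw [classSize_eq_index, classSize_eq_index, classSize_eq_index]
  exact ⟨Subgroup.index_dvd_of_le hsx, Subgroup.index_dvd_of_le hsy⟩
end

section
/- Let G be a finite group and x, y ∈ G noncommuting elements with x a p-element, y a q-element, p ≠ q, and gcd(|x^G|, |y^G|) = 1. Then p divides |y^G| and q divides |x^G|. -/
/-!
The class sizes are the indices of the centralizers `C(x)`, `C(y)`, and two subgroups of coprime
index satisfy `G = C(y) C(x)`. If `p` did not divide `|G : C(y)|`, then `C(y)` would contain a
Sylow `p`-subgroup of `G`, hence a conjugate `g x g⁻¹` of the `p`-element `x`. Writing `g = b a`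
with `b ∈ C(y)` and `a ∈ C(x)`, the element `b x b⁻¹` commutes with `y = b y b⁻¹`, so `x` commutes
with `y`. The divisibility `q ∣ |x^G|` is the same argument with `x` and `y` swapped.
-/

namespace Subgroup

variable {G : Type*} [Group G]

theorem relIndex_eq_index_of_coprime {H K : Subgroup G} [H.FiniteIndex] [K.FiniteIndex]
    (h : Nat.Coprime H.index K.index) : H.relIndex K = H.index := by
  have hmul : H.relIndex K * K.index = (H ⊓ K).index := by
    rw [← inf_relIndex_right, relIndex_mul_index inf_le_right]
  have : H.IsFiniteRelIndex K := isFiniteRelIndex_of_finiteIndex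
  refine le_antisymm ?_ (Nat.le_of_dvd (Nat.pos_of_ne_zero relIndex_ne_zero) ?_)
  · refine Nat.le_of_mul_le_mul_right ?_ (Nat.pos_of_ne_zero K.index_ne_zero_of_finite)
    exact hmul ▸ index_inf_le
  · exact h.dvd_of_dvd_mul_right (hmul ▸ index_dvd_of_le inf_le_left)

theorem exists_mul_eq_of_relIndex_eq_index {H K : Subgroup G} [H.FiniteIndex]
    (h : H.relIndex K = H.index) (g : G) : ∃ k ∈ K, ∃ a ∈ H, k * a = g := by
  -- `K` acts transitively on `G ⧸ H`: the orbit of `H` has `|K : K ⊓ H| = |G : H|` points.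
  have hsmul (k : K) : k • ((1 : G) : G ⧸ H) = ((k : G) : G ⧸ H) := congrArg _ (mul_one _)
  have hstab : MulAction.stabilizer K ((1 : G) : G ⧸ H) = H.subgroupOf K := by
    ext k
    rw [MulAction.mem_stabilizer_iff, hsmul, QuotientGroup.eq, mul_one, inv_mem_iff,
      mem_subgroupOf]
  have horbit : MulAction.orbit K ((1 : G) : G ⧸ H) = Set.univ := by
    refine Set.eq_of_subset_of_ncard_le (Set.subset_univ _) ?_
    rw [Set.ncard_univ, ← MulAction.index_stabilizer, hstab, ← relIndex, h, index]
  obtain ⟨k, hk⟩ : ∃ k : K, k • ((1 : G) : G ⧸ H) = g :=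
    MulAction.mem_orbit_iff.mp (horbit ▸ Set.mem_univ _)
  rw [hsmul, QuotientGroup.eq] at hk
  exact ⟨k, k.2, (k : G)⁻¹ * g, hk, mul_inv_cancel_left _ _⟩

theorem exists_mul_eq_of_coprime_index {H K : Subgroup G} [H.FiniteIndex] [K.FiniteIndex]
    (h : Nat.Coprime H.index K.index) (g : G) : ∃ k ∈ K, ∃ a ∈ H, k * a = g :=
  exists_mul_eq_of_relIndex_eq_index (relIndex_eq_index_of_coprime h) g

theorem exists_sylow_le_of_not_dvd_index [Finite G] {p : ℕ} [Fact p.Prime] {K : Subgroup G}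
    (h : ¬ p ∣ K.index) : ∃ P : Sylow p G, (P : Subgroup G) ≤ K := by
  let Q : Sylow p K := Sylow.nonempty.some
  have hQ : ¬ p ∣ (Q.1.map K.subtype).index := by
    rw [index_map_subtype]
    exact Nat.Prime.not_dvd_mul Fact.out Q.not_dvd_index h
  exact ⟨(Q.2.map K.subtype).toSylow hQ, map_subtype_le _⟩

theorem exists_conj_mem_of_not_dvd_index [Finite G] {p : ℕ} (hp : p.Prime) {K : Subgroup G}
    (hK : ¬ p ∣ K.index) {x : G} (hx : ∃ a : ℕ, orderOf x = p ^ a) :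
    ∃ g : G, g * x * g⁻¹ ∈ K := by
  have : Fact p.Prime := ⟨hp⟩
  obtain ⟨a, ha⟩ := hx
  have hpx : IsPGroup p (zpowers x) := IsPGroup.of_card (by rw [Nat.card_zpowers, ha])
  obtain ⟨Q, hxQ⟩ := hpx.exists_le_sylow
  obtain ⟨P, hPK⟩ := exists_sylow_le_of_not_dvd_index hK
  obtain ⟨g, rfl⟩ := MulAction.exists_smul_eq G Q P
  exact ⟨g, hPK ⟨x, hxQ (mem_zpowers x), rfl⟩⟩

theorem dvd_index_centralizer_of_not_commute [Finite G] {p : ℕ} (hp : p.Prime) {x y : G}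
    (hx : ∃ a : ℕ, orderOf x = p ^ a) (hxy : ¬ Commute x y)
    (h : Nat.Coprime (centralizer {x}).index (centralizer {y}).index) :
    p ∣ (centralizer {y}).index := by
  by_contra hpy
  obtain ⟨g, hg⟩ := exists_conj_mem_of_not_dvd_index hp hpy hx
  obtain ⟨b, hb, a, ha, rfl⟩ := exists_mul_eq_of_coprime_index h g
  have hconj : b * a * x * (b * a)⁻¹ = b * x * b⁻¹ := by
    rw [show b * a * x * (b * a)⁻¹ = b * (a * x * a⁻¹) * b⁻¹ by group,
      mem_centralizer_singleton_iff.mp ha, mul_inv_cancel_right]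
  have hy : b * y * b⁻¹ = y := by
    rw [mem_centralizer_singleton_iff.mp hb, mul_inv_cancel_right]
  refine hxy ((Commute.conj_iff b).mp ?_)
  rw [hy, ← hconj]
  exact mem_centralizer_singleton_iff.mp hg

end Subgroup

theorem classSize_eq_index_centralizer {G : Type*} [Group G] (x : G) :
    classSize x = (Subgroup.centralizer {x}).index := by
  have : classSet x = MulAction.orbit (ConjAct G) x := by
    ext y
    exact (ConjAct.mem_orbit_conjAct.trans isConj_comm).symm
  rw [classSize, this, Nat.card_coe_set_eq, ← MulAction.index_stabilizer,
    ConjAct.stabilizer_eq_centralizer]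
  rfl

theorem stmt4_general {G : Type*} [Group G] [Finite G] (p q : ℕ) (hp : p.Prime) (hq : q.Prime)
    (x y : G) (hnc : ¬ Commute x y)
    (hx : ∃ a : ℕ, orderOf x = p ^ a) (hy : ∃ b : ℕ, orderOf y = q ^ b)
    (h : Nat.Coprime (classSize x) (classSize y)) :
    p ∣ classSize y ∧ q ∣ classSize x := by
  rw [classSize_eq_index_centralizer, classSize_eq_index_centralizer] at h ⊢
  exact ⟨Subgroup.dvd_index_centralizer_of_not_commute hp hx hnc h,
    Subgroup.dvd_index_centralizer_of_not_commute hq hy (fun hyx => hnc hyx.symm) h.symm⟩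

theorem stmt4 {G : Type*} [Group G] [Finite G] (p q : ℕ) (hp : p.Prime) (hq : q.Prime)
    (hpq : p ≠ q) (x y : G) (hnc : ¬ Commute x y)
    (hx : ∃ a : ℕ, orderOf x = p ^ a) (hy : ∃ b : ℕ, orderOf y = q ^ b)
    (h : Nat.Coprime (classSize x) (classSize y)) :
    p ∣ classSize y ∧ q ∣ classSize x :=
  stmt4_general p q hp hq x y hnc hx hy h
end

section
/- Let G be a finite group and N ⊴ G a normal subgroup such that N/Z(N) is a p-group for a prime p. Then N = P × A where P is a Sylow p-subgroup of N and A ≤ Z(N) is a p'-group. -/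
private lemma aux13 {H : Type*} [Group H] [Finite H] (p : ℕ) (hp : p.Prime)
    (h : IsPGroup p (H ⧸ Subgroup.center H)) :
    ∃ (P : Sylow p H) (A : Subgroup H), A ≤ Subgroup.center H ∧
      (∀ a ∈ A, ¬ p ∣ orderOf a) ∧ Disjoint (P : Subgroup H) A ∧
      (P : Subgroup H) ⊔ A = ⊤ := by
  haveI : Fact p.Prime := ⟨hp⟩
  -- every p'-element is central
  have key : ∀ a : H, ¬ p ∣ orderOf a → a ∈ Subgroup.center H := by
    intro a ha
    have h1 : orderOf ((a : H ⧸ Subgroup.center H)) ∣ orderOf a :=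
      orderOf_dvd_of_pow_eq_one (by rw [← QuotientGroup.mk_pow, pow_orderOf_eq_one]; rfl)
    obtain ⟨k, hk⟩ := h (a : H ⧸ Subgroup.center H)
    have h2 : orderOf ((a : H ⧸ Subgroup.center H)) ∣ p ^ k := orderOf_dvd_of_pow_eq_one hk
    have h3 : orderOf ((a : H ⧸ Subgroup.center H)) = 1 := by
      rcases (Nat.dvd_prime_pow hp).mp h2 with ⟨j, _, hj⟩
      rcases Nat.eq_zero_or_pos j with rfl | hjpos
      · simpa using hj
      · exact absurd (dvd_trans (hj ▸ dvd_pow_self p hjpos.ne') h1) ha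
    have := orderOf_eq_one_iff.mp h3
    rwa [← QuotientGroup.eq_one_iff a]
  let A : Subgroup H :=
    { carrier := {a : H | ¬ p ∣ orderOf a}
      one_mem' := by simp [hp.one_lt.ne']
      inv_mem' := by intro a ha; simpa using ha
      mul_mem' := by
        intro a b ha hb
        have hc : Commute a b := (key a ha).comm b
        intro hdvd
        have h4 : p ∣ Nat.lcm (orderOf a) (orderOf b) :=
          hdvd.trans hc.orderOf_mul_dvd_lcm
        have h5 : p ∣ orderOf a * orderOf b := h4.trans (Nat.lcm_dvd_mul _ _)
        rcases hp.dvd_mul.mp h5 with h' | h'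
        · exact ha h'
        · exact hb h' }
  have hAle : A ≤ Subgroup.center H := fun a ha => key a ha
  have hAnormal : A.Normal := by
    constructor
    intro n hn g
    have heq : g * n * g⁻¹ = n := by
      have h6 := ((hAle hn).comm g).symm
      rw [h6, mul_assoc, mul_inv_cancel, mul_one]
    rw [heq]; exact hn
  haveI := hAnormal
  -- p does not divide card A
  have hpA : ¬ p ∣ Nat.card A := by
    intro hdvd
    haveI : Fintype A := Fintype.ofFinite A
    rw [Nat.card_eq_fintype_card] at hdvd
    obtain ⟨a, ha⟩ := exists_prime_orderOf_dvd_card p hdvd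
    have : orderOf (a : H) = p := by rw [Subgroup.orderOf_coe, ha]
    exact a.2 (this ▸ dvd_rfl)
  -- H ⧸ A is a p-group
  have hquot : IsPGroup p (H ⧸ A) := by
    intro g
    induction g using QuotientGroup.induction_on with
    | H x =>
      refine ⟨(orderOf x).factorization p, ?_⟩
      rw [← QuotientGroup.mk_pow, QuotientGroup.eq_one_iff]
      show ¬ p ∣ orderOf (x ^ p ^ (orderOf x).factorization p)
      rw [orderOf_pow, Nat.gcd_eq_right (Nat.ordProj_dvd _ _)]
      exact Nat.not_dvd_ordCompl hp (orderOf_pos x).ne'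
  obtain ⟨P⟩ : Nonempty (Sylow p H) := Sylow.nonempty
  refine ⟨P, A, hAle, fun a ha => ha, ?_, ?_⟩
  · rw [Subgroup.disjoint_def]
    intro x hxP hxA
    obtain ⟨k, hk⟩ := P.isPGroup' ⟨x, hxP⟩
    have hk' : x ^ p ^ k = 1 := by
      have := congrArg (Subtype.val) hk
      push_cast at this
      exact this
    have hdvd : orderOf x ∣ p ^ k := orderOf_dvd_of_pow_eq_one hk'
    rcases (Nat.dvd_prime_pow hp).mp hdvd with ⟨j, _, hj⟩
    rcases Nat.eq_zero_or_pos j with rfl | hpos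
    · rw [pow_zero] at hj
      exact orderOf_eq_one_iff.mp hj
    · exact absurd (hj ▸ dvd_pow_self p hpos.ne') hxA
  · have hcard : Nat.card H = Nat.card (H ⧸ A) * Nat.card A :=
      Subgroup.card_eq_card_quotient_mul_card_subgroup A
    obtain ⟨j, hj⟩ := IsPGroup.iff_card.mp hquot
    have hfact : (Nat.card H).factorization p = j := by
      rw [hcard, hj, Nat.factorization_mul (pow_ne_zero _ hp.pos.ne') Nat.card_pos.ne',
        hp.factorization_pow]
      simp [Nat.factorization_eq_zero_of_not_dvd hpA]
    have hP : Nat.card (P : Subgroup H) = p ^ j := by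
      rw [P.card_eq_multiplicity, hfact]
    have hPA_dvd : Nat.card (P : Subgroup H) * Nat.card A ∣
        Nat.card ((P : Subgroup H) ⊔ A : Subgroup H) := by
      refine Nat.Coprime.mul_dvd_of_dvd_of_dvd ?_
        (Subgroup.card_dvd_of_le le_sup_left) (Subgroup.card_dvd_of_le le_sup_right)
      rw [hP]
      exact Nat.Coprime.pow_left _ (hp.coprime_iff_not_dvd.mpr hpA)
    have htop_dvd : Nat.card ((P : Subgroup H) ⊔ A : Subgroup H) ∣ Nat.card H :=
      Subgroup.card_subgroup_dvd_card _
    have hHeq : Nat.card H = Nat.card (P : Subgroup H) * Nat.card A := by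
      rw [hcard, hj, hP]
    have hcard_eq : Nat.card ((P : Subgroup H) ⊔ A : Subgroup H) = Nat.card H :=
      Nat.dvd_antisymm htop_dvd (hHeq ▸ hPA_dvd)
    exact Subgroup.eq_top_of_card_eq _ hcard_eq

theorem stmt13 {G : Type*} [Group G] [Finite G] (N : Subgroup G) (hN : N.Normal)
    (p : ℕ) (hp : p.Prime)
    (h : IsPGroup p (↥N ⧸ Subgroup.center ↥N)) :
    ∃ (P : Sylow p ↥N) (A : Subgroup ↥N), A ≤ Subgroup.center ↥N ∧
      (∀ a ∈ A, ¬ p ∣ orderOf a) ∧ Disjoint (P : Subgroup ↥N) A ∧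
      (P : Subgroup ↥N) ⊔ A = ⊤ := by
  exact aux13 p hp h
end

section
/- Let G be a finite group, N ⊴ G, and x, y ∈ N noncommuting elements of coprime prime-power orders (x a p-element, y a q-element, p ≠ q) such that every G-class in N has size coprime to |x^G| or to |y^G|. Let K = C_G(x) ∩ C_G(y) and π = π(|x^G|) ∪ π(|y^G|). Then every π'-element z of K ∩ N has |z^G| a π'-number. -/
/-!
If `p ∤ |y^G| = |G : C_G(y)|`, the `p`-group `⟨x⟩` fixes a coset of `C_G(y)`, so some conjugate
`x'` of `x` commutes with `y`. Since `x'` and `y` have coprime orders, both are powers of `x'y`,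
so `|x^G|` and `|y^G|` both divide `|(x'y)^G|`, which the hypothesis forbids as neither class is
trivial. Hence `p ∣ |y^G|` and `q ∣ |x^G|`, so the `π'`-element `z` has order prime to `p` and `q`,
and the same product argument applied to `zy` and `zx` shows that `|z^G|` is prime to `|x^G|`
and to `|y^G|`.
-/

section

variable {G : Type*} [Group G]

theorem IsConj.orderOf_eq {a b : G} (h : IsConj a b) : orderOf a = orderOf b := by
  obtain ⟨g, rfl⟩ := isConj_iff.mp h
  exact ((MulAut.conj g).orderOf_eq a).symm

theorem IsConj.classSize_eq {a b : G} (h : IsConj a b) : classSize a = classSize b := by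
  have : classSet a = classSet b := Set.ext fun _ => ⟨h.symm.trans, h.trans⟩
  rw [classSize, this, classSize]

theorem classSize_eq_index_s14 (a : G) : classSize a = (Subgroup.centralizer {a}).index := by
  have : classSet a = MulAction.orbit (ConjAct G) a :=
    Set.ext fun _ => isConj_comm.trans ConjAct.mem_orbit_conjAct.symm
  rw [classSize, this, Nat.card_coe_set_eq, ← MulAction.index_stabilizer,
    Subgroup.centralizer_eq_comap_stabilizer]
  exact (Subgroup.index_comap_of_surjective _ (MulEquiv.surjective _)).symm

theorem classSize_ne_one_of_not_commute {a b : G} (h : ¬Commute a b) : classSize a ≠ 1 := by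
  intro h1
  rw [classSize_eq_index_s14, Subgroup.index_eq_one] at h1
  have hb : b ∈ Subgroup.centralizer {a} := h1 ▸ Subgroup.mem_top b
  exact h (Subgroup.mem_centralizer_singleton_iff.mp hb).symm

theorem classSize_dvd_classSize_of_centralizer_le {a b : G}
    (h : Subgroup.centralizer {b} ≤ Subgroup.centralizer {a}) : classSize a ∣ classSize b := by
  rw [classSize_eq_index_s14, classSize_eq_index_s14]
  exact Subgroup.index_dvd_of_le h

theorem Commute.centralizer_mul_le_left {a b : G} (h : Commute a b)
    (hco : (orderOf a).Coprime (orderOf b)) :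
    Subgroup.centralizer {a * b} ≤ Subgroup.centralizer {a} := by
  obtain ⟨k, hka, hkb⟩ := Nat.chineseRemainder hco 1 0
  have hpow : (a * b) ^ k = a := by
    rw [h.mul_pow, orderOf_dvd_iff_pow_eq_one.mp (Nat.modEq_zero_iff_dvd.mp hkb),
      pow_eq_pow_iff_modEq.mpr hka, pow_one, mul_one]
  intro g hg
  rw [Subgroup.mem_centralizer_singleton_iff] at hg ⊢
  simpa only [hpow] using ((show Commute g (a * b) from hg).pow_right k).eq

theorem Commute.classSize_dvd_classSize_mul_left {a b : G} (h : Commute a b)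
    (hco : (orderOf a).Coprime (orderOf b)) : classSize a ∣ classSize (a * b) :=
  classSize_dvd_classSize_of_centralizer_le (h.centralizer_mul_le_left hco)

theorem Commute.classSize_dvd_classSize_mul_right {a b : G} (h : Commute a b)
    (hco : (orderOf a).Coprime (orderOf b)) : classSize b ∣ classSize (a * b) :=
  h.eq ▸ h.symm.classSize_dvd_classSize_mul_left hco.symm

theorem exists_isConj_mem_of_not_dvd_index [Finite G] {p a : ℕ} [Fact p.Prime]
    {H : Subgroup G} (hH : ¬p ∣ H.index) {x : G} (hx : orderOf x = p ^ a) :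
    ∃ x', IsConj x x' ∧ x' ∈ H := by
  have hP : IsPGroup p (Subgroup.zpowers x) := IsPGroup.of_card (by rw [Nat.card_zpowers, hx])
  obtain ⟨c, hc⟩ := hP.nonempty_fixed_point_of_prime_not_dvd_card (G ⧸ H) hH
  induction c using QuotientGroup.induction_on with | H g => ?_
  have hg := hc ⟨x, Subgroup.mem_zpowers x⟩
  change ((x * g : G) : G ⧸ H) = g at hg
  refine ⟨g⁻¹ * x * g, isConj_iff.mpr ⟨g⁻¹, by group⟩, ?_⟩
  simpa [mul_assoc] using H.inv_mem (QuotientGroup.eq.mp hg)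

theorem coprime_classSize_of_commute {x y w : G} (hy : classSize y ≠ 1) (hwy : Commute w y)
    (hco : (orderOf w).Coprime (orderOf y))
    (hcl : (classSize (w * y)).Coprime (classSize x) ∨ (classSize (w * y)).Coprime (classSize y)) :
    (classSize w).Coprime (classSize x) := by
  rcases hcl with h | h
  · exact h.coprime_dvd_left (hwy.classSize_dvd_classSize_mul_left hco)
  · exact absurd (Nat.eq_one_of_dvd_coprimes h (hwy.classSize_dvd_classSize_mul_right hco) dvd_rfl) hy

theorem prime_dvd_classSize_of_not_commute [Finite G] {N : Subgroup G} (hN : N.Normal)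
    {x y : G} (hx : x ∈ N) (hy : y ∈ N) (hnc : ¬Commute x y) {p a : ℕ} (hp : p.Prime)
    (hxp : orderOf x = p ^ a) (hco : (orderOf x).Coprime (orderOf y))
    (hcl : ∀ w ∈ N, (classSize w).Coprime (classSize x) ∨ (classSize w).Coprime (classSize y)) :
    p ∣ classSize y := by
  by_contra hpy
  have : Fact p.Prime := ⟨hp⟩
  rw [classSize_eq_index_s14] at hpy
  obtain ⟨x', hxx', hx'y⟩ := exists_isConj_mem_of_not_dvd_index hpy hxp
  have hx'N : x' ∈ N := by
    obtain ⟨g, rfl⟩ := isConj_iff.mp hxx'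
    exact hN.conj_mem x hx g
  have hcop := coprime_classSize_of_commute (x := x)
    (classSize_ne_one_of_not_commute (mt Commute.symm hnc))
    (Subgroup.mem_centralizer_singleton_iff.mp hx'y) (hxx'.orderOf_eq ▸ hco)
    (hcl _ (N.mul_mem hx'N hy))
  rw [← hxx'.classSize_eq, Nat.coprime_self] at hcop
  exact classSize_ne_one_of_not_commute hnc hcop

end

theorem stmt14 {G : Type*} [Group G] [Finite G] (N : Subgroup G) (hN : N.Normal)
    (p q : ℕ) (hp : p.Prime) (hq : q.Prime) (hpq : p ≠ q)
    (x y : G) (hx : x ∈ N) (hy : y ∈ N) (hnc : ¬ Commute x y)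
    (hxp : ∃ a : ℕ, orderOf x = p ^ a) (hyq : ∃ b : ℕ, orderOf y = q ^ b)
    (hcl : ∀ z ∈ N, Nat.Coprime (classSize z) (classSize x) ∨
      Nat.Coprime (classSize z) (classSize y))
    (π : Set ℕ) (hπ : π = {r | r.Prime ∧ (r ∣ classSize x ∨ r ∣ classSize y)})
    (z : G) (hzK : z ∈ Subgroup.centralizer {x} ⊓ Subgroup.centralizer {y}) (hzN : z ∈ N)
    (hzord : ∀ r : ℕ, r.Prime → r ∣ orderOf z → r ∉ π) :
    ∀ r : ℕ, r.Prime → r ∣ classSize z → r ∉ π := by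
  subst hπ
  obtain ⟨⟨a, ha⟩, ⟨b, hb⟩⟩ := And.intro hxp hyq
  have hco : (orderOf x).Coprime (orderOf y) := by
    rw [ha, hb]
    exact Nat.Coprime.pow _ _ ((Nat.coprime_primes hp hq).mpr hpq)
  have hyx : ¬Commute y x := mt Commute.symm hnc
  have hpy : p ∣ classSize y := prime_dvd_classSize_of_not_commute hN hx hy hnc hp ha hco hcl
  have hqx : q ∣ classSize x := prime_dvd_classSize_of_not_commute hN hy hx hyx hq hb hco.symm
    fun w hw => (hcl w hw).symm
  obtain ⟨hzx, hzy⟩ := Subgroup.mem_inf.mp hzK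
  rintro r hr hrz ⟨-, hrx | hry⟩
  · have hzq : (orderOf z).Coprime (orderOf y) := hb ▸ Nat.Coprime.pow_right _
      ((hq.coprime_iff_not_dvd.mpr fun h => hzord q hq h ⟨hq, .inl hqx⟩).symm)
    have := coprime_classSize_of_commute (classSize_ne_one_of_not_commute hyx)
      (Subgroup.mem_centralizer_singleton_iff.mp hzy) hzq (hcl _ (N.mul_mem hzN hy))
    exact hr.ne_one (Nat.eq_one_of_dvd_coprimes this hrz hrx)
  · have hzp : (orderOf z).Coprime (orderOf x) := ha ▸ Nat.Coprime.pow_right _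
      ((hp.coprime_iff_not_dvd.mpr fun h => hzord p hp h ⟨hp, .inr hpy⟩).symm)
    have := coprime_classSize_of_commute (classSize_ne_one_of_not_commute hnc)
      (Subgroup.mem_centralizer_singleton_iff.mp hzx) hzp ((hcl _ (N.mul_mem hzN hx)).symm)
    exact hr.ne_one (Nat.eq_one_of_dvd_coprimes this hrz hry)
end
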